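/- arXiv:1612.05779 — 3 statements merged into one kernel-verified Lean document; each statement's English description precedes it below -/
import Mathlib

section
/- Let G be a group that is an internal semidirect product A ⋊ B, and let ρ, ρ' : G → GL_r(ℂ) be representations that agree on A, with common restriction ρ_A irreducible. Then there exists a group homomorphism λ : B → ℂ* such that for every a ∈ A and b ∈ B, ρ(a·b) = λ(b) · ρ'(a·b). -/
/-!
For `g ∈ G` the matrix `ρ'(g)⁻¹ ρ(g)` commutes with `ρ(A)`, because conjugation by `g` preserves
the normal subgroup `A` on which `ρ` and `ρ'` agree. By Schur's lemma it is therefore a scalar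
`λ(g)`, and since scalars are central, `b ↦ λ(b)` is multiplicative on `B`.
-/

open Matrix

theorem Matrix.mem_range_scalar_of_forall_commute {K ι : Type*} [Field K] [IsAlgClosed K]
    {n : Type*} [Fintype n] [DecidableEq n] (X : ι → Matrix n n K)
    (hirr : ∀ V : Submodule K (n → K), (∀ i, ∀ v ∈ V, X i *ᵥ v ∈ V) → V = ⊥ ∨ V = ⊤)
    {M : Matrix n n K} (hM : ∀ i, Commute M (X i)) : M ∈ Set.range (scalar n) := by
  cases isEmpty_or_nonempty n
  · exact ⟨0, Subsingleton.elim _ _⟩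
  set f : Module.End K (n → K) := toLinAlgEquiv' M
  obtain ⟨c, hc⟩ := Module.End.exists_eigenvalue f
  have hinv : ∀ i, ∀ v ∈ f.eigenspace c, X i *ᵥ v ∈ f.eigenspace c := fun i =>
    Module.End.mapsTo_genEigenspace_of_comm ((hM i).map toLinAlgEquiv') c 1
  have htop : f.eigenspace c = ⊤ := (hirr _ hinv).resolve_left hc
  refine ⟨c, toLinAlgEquiv'.injective (LinearMap.ext fun v => ?_)⟩
  have hv : v ∈ f.eigenspace c := htop ▸ Submodule.mem_top
  rw [Module.End.mem_eigenspace_iff] at hv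
  simpa [f, toLinAlgEquiv'_apply, smul_eq_diagonal_mul] using hv.symm

section

variable {G H : Type*} [Group G] [Group H]

theorem commute_inv_mul_map_of_eqOn_normal {A : Subgroup G} (hA : A.Normal) {ρ ρ' : G →* H}
    (hagree : ∀ a ∈ A, ρ a = ρ' a) (g : G) {a : G} (ha : a ∈ A) :
    Commute ((ρ' g)⁻¹ * ρ g) (ρ a) := by
  have hconj : ρ g * ρ a * (ρ g)⁻¹ = ρ' g * ρ a * (ρ' g)⁻¹ := by
    simpa [hagree a ha] using hagree _ (hA.conj_mem a ha g)
  calc (ρ' g)⁻¹ * ρ g * ρ a = (ρ' g)⁻¹ * (ρ g * ρ a * (ρ g)⁻¹) * ρ g := by group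
    _ = ρ a * ((ρ' g)⁻¹ * ρ g) := by rw [hconj]; group

def MonoidHom.centralRatio (ρ ρ' : G →* H) (h : ∀ g, (ρ' g)⁻¹ * ρ g ∈ Subgroup.center H) :
    G →* Subgroup.center H where
  toFun g := ⟨(ρ' g)⁻¹ * ρ g, h g⟩
  map_one' := by ext; simp
  map_mul' g g' := by
    ext
    have hcomm := Subgroup.mem_center_iff.mp (h g) (ρ' g')
    calc (ρ' (g * g'))⁻¹ * ρ (g * g')
        = (ρ' g')⁻¹ * (ρ' g' * ((ρ' g)⁻¹ * ρ g)) * (ρ' g')⁻¹ * ρ g' := by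
          rw [hcomm, map_mul, map_mul]; group
      _ = (ρ' g)⁻¹ * ρ g * ((ρ' g')⁻¹ * ρ g') := by group

end

namespace Matrix.GeneralLinearGroup

variable {n R : Type*} [Fintype n] [DecidableEq n] [Nonempty n] [CommRing R]

theorem scalar_injective : Function.Injective (scalar n : Rˣ →* GL n R) :=
  fun _ _ h => Units.ext (scalar_inj.mp (congrArg Units.val h))

noncomputable def centerEquivUnits : Subgroup.center (GL n R) ≃* Rˣ :=
  (MulEquiv.subgroupCongr center_eq_range_scalar).trans
    (MonoidHom.ofInjective scalar_injective).symm

theorem scalar_centerEquivUnits (g : Subgroup.center (GL n R)) :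
    scalar n (centerEquivUnits g) = g :=
  MonoidHom.apply_ofInjective_symm scalar_injective _

end Matrix.GeneralLinearGroup

open Matrix.GeneralLinearGroup in
theorem stmt1_general {G : Type} [Group G] (A B : Subgroup G) (hA : A.Normal)
    (r : ℕ) (ρ ρ' : G →* GL (Fin r) ℂ)
    (hagree : ∀ a : A, ρ (a : G) = ρ' (a : G))
    (hirr : ∀ V : Submodule ℂ (Fin r → ℂ),
      (∀ a : A, ∀ v ∈ V, (ρ (a : G) : Matrix (Fin r) (Fin r) ℂ).mulVec v ∈ V) →
      V = ⊥ ∨ V = ⊤) :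
    ∃ lam : B →* ℂˣ, ∀ (a : A) (b : B),
      (ρ ((a : G) * (b : G)) : Matrix (Fin r) (Fin r) ℂ)
        = (lam b : ℂ) • (ρ' ((a : G) * (b : G)) : Matrix (Fin r) (Fin r) ℂ) := by
  rcases isEmpty_or_nonempty (Fin r) with hr | hr
  · exact ⟨1, fun _ _ => Subsingleton.elim _ _⟩
  have hcentral : ∀ g : G, (ρ' g)⁻¹ * ρ g ∈ Subgroup.center (GL (Fin r) ℂ) := fun g =>
    mem_center_iff_val_mem_range_scalar.mpr <|
      mem_range_scalar_of_forall_commute _ hirr fun a =>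
        (commute_inv_mul_map_of_eqOn_normal hA (fun a ha => hagree ⟨a, ha⟩) g a.2).units_val
  let lam : B →* ℂˣ := centerEquivUnits.toMonoidHom.comp
    ((ρ.comp B.subtype).centralRatio (ρ'.comp B.subtype) fun b => hcentral b)
  refine ⟨lam, fun a b => ?_⟩
  have hb : ρ b = ρ' b * scalar (Fin r) (lam b) := by
    simp only [lam, MonoidHom.comp_apply, MulEquiv.coe_toMonoidHom, scalar_centerEquivUnits]
    exact (mul_inv_cancel_left _ _).symm
  rw [map_mul, map_mul, Units.val_mul, Units.val_mul, hagree a, hb, Units.val_mul, coe_scalar,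
    ← mul_assoc, scalar_apply, ← smul_eq_mul_diagonal]

/-- Two representations of `G = A ⋊ B` agreeing on `A` with irreducible common restriction
differ by a character of `B`. -/
theorem stmt1 {G : Type} [Group G] (A B : Subgroup G) (hA : A.Normal)
    (htriv : A ⊓ B = ⊥) (hgen : ∀ g : G, ∃ a ∈ A, ∃ b ∈ B, g = a * b)
    (r : ℕ) (ρ ρ' : G →* GL (Fin r) ℂ)
    (hagree : ∀ a : A, ρ (a : G) = ρ' (a : G))
    (hirr : ∀ V : Submodule ℂ (Fin r → ℂ),
      (∀ a : A, ∀ v ∈ V, (ρ (a : G) : Matrix (Fin r) (Fin r) ℂ).mulVec v ∈ V) →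
      V = ⊥ ∨ V = ⊤) :
    ∃ lam : B →* ℂˣ, ∀ (a : A) (b : B),
      (ρ ((a : G) * (b : G)) : Matrix (Fin r) (Fin r) ℂ)
        = (lam b : ℂ) • (ρ' ((a : G) * (b : G)) : Matrix (Fin r) (Fin r) ℂ) :=
  stmt1_general A B hA r ρ ρ' hagree hirr
end

section
/- Let ρ, ρ' : Γ → Upp be representations of a group Γ into the group Upp of invertible upper-triangular 2×2 complex matrices, and assume both ρ and ρ' are not semisimple (i.e., the line spanned by e₁ is the unique line invariant under the image). Write ρ = ρ_{ℂ*} ⊗ ρ_Aff where ρ_{ℂ*}(α) is the (2,2) entry of ρ(α) and ρ_Aff = ρ_{ℂ*}⁻¹ ⊗ ρ, and similarly for ρ'. Then ρ and ρ' are conjugate in GL₂(ℂ) if and only if ρ_{ℂ*} = ρ'_{ℂ*} and ρ_Aff, ρ'_Aff are conjugate in Aff(ℂ). -/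
/-!
If `M ρ M⁻¹ = ρ'`, then `M` carries the `ρ`-invariant line `ℂ e₁` to a `ρ'`-invariant line, which
by non-semisimplicity of `ρ'` is `ℂ e₁` again; so `M` is upper triangular. Comparing `(2,2)` entries
of `M ρ = ρ' M` gives equal scalar parts, and then `M / M₂₂ ∈ Aff(ℂ)` conjugates the affine parts.
Conversely, once the scalar parts agree they cancel, so an affine conjugator of the affine parts
conjugates `ρ` to `ρ'`.
-/

open Matrix

theorem Matrix.GeneralLinearGroup.conj_eq_iff_mul_eq_mul {n R : Type*} [Fintype n] [DecidableEq n]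
    [Semiring R] (M A B : GL n R) : M * A * M⁻¹ = B ↔
      (M : Matrix n n R) * (A : Matrix n n R) = (B : Matrix n n R) * (M : Matrix n n R) := by
  rw [mul_inv_eq_iff_eq_mul, Units.ext_iff, Units.val_mul, Units.val_mul]

section UpperTriangular

variable {K : Type*} [Field K]

theorem Matrix.GeneralLinearGroup.apply_one_one_ne_zero_of_apply_one_zero (A : GL (Fin 2) K)
    (h : (A : Matrix (Fin 2) (Fin 2) K) 1 0 = 0) : (A : Matrix (Fin 2) (Fin 2) K) 1 1 ≠ 0 := by
  have hdet := (Matrix.isUnit_iff_isUnit_det _).mp A.isUnit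
  rw [Matrix.det_fin_two, h, mul_zero, sub_zero] at hdet
  exact right_ne_zero_of_mul hdet.ne_zero

theorem Matrix.mulVec_single_zero_of_apply_one_zero {A : Matrix (Fin 2) (Fin 2) K}
    (h : A 1 0 = 0) : A *ᵥ Pi.single 0 1 = A 0 0 • Pi.single 0 1 := by
  ext i
  fin_cases i <;> simp [h]

/- `K ∙ M e₀` is `B`-invariant because `e₀` is a common eigenvector of the `A i`. -/
theorem Matrix.GeneralLinearGroup.apply_one_zero_eq_zero_of_mul_eq_mul {ι : Type*}
    (M : GL (Fin 2) K) {A B : ι → Matrix (Fin 2) (Fin 2) K} (hA : ∀ i, A i 1 0 = 0)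
    (hB : ∀ V : Submodule K (Fin 2 → K), (∀ i, ∀ v ∈ V, B i *ᵥ v ∈ V) →
      Module.finrank K V = 1 → V = Submodule.span K {Pi.single (0 : Fin 2) (1 : K)})
    (hM : ∀ i, (M : Matrix (Fin 2) (Fin 2) K) * A i = B i * M) :
    (M : Matrix (Fin 2) (Fin 2) K) 1 0 = 0 := by
  set v := (M : Matrix (Fin 2) (Fin 2) K) *ᵥ Pi.single 0 1
  have hv : v ≠ 0 := by
    rw [← mulVec_zero (M : Matrix (Fin 2) (Fin 2) K),
      (mulVec_injective_of_isUnit M.isUnit).ne_iff]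
    simp
  have hinv : ∀ i, ∀ w ∈ K ∙ v, B i *ᵥ w ∈ K ∙ v := by
    intro i w hw
    obtain ⟨c, rfl⟩ := Submodule.mem_span_singleton.mp hw
    rw [mulVec_smul, mulVec_mulVec, ← hM i, ← mulVec_mulVec,
      mulVec_single_zero_of_apply_one_zero (hA i), mulVec_smul, smul_smul]
    exact Submodule.mem_span_singleton.mpr ⟨_, rfl⟩
  obtain ⟨c, hc⟩ := Submodule.mem_span_singleton.mp
    (hB _ hinv (finrank_span_singleton hv) ▸ Submodule.mem_span_singleton_self v)
  simpa [v] using (congrFun hc 1).symm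

theorem Matrix.apply_one_one_eq_of_mul_eq_mul {M A B : Matrix (Fin 2) (Fin 2) K}
    (hM10 : M 1 0 = 0) (hM11 : M 1 1 ≠ 0) (hB : B 1 0 = 0) (h : M * A = B * M) :
    A 1 1 = B 1 1 := by
  have h11 := congrFun (congrFun h 1) 1
  simp only [mul_apply, Fin.sum_univ_two, hM10, hB, zero_mul, zero_add] at h11
  exact mul_left_cancel₀ hM11 (h11.trans (mul_comm _ _))

theorem Matrix.mul_smul_eq_smul_mul_iff {n : Type*} [Fintype n] {P A B : Matrix n n K} {c : K}
    (hc : c ≠ 0) : P * (c • A) = (c • B) * P ↔ P * A = B * P := by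
  rw [mul_smul_comm, smul_mul_assoc, smul_right_inj hc]

end UpperTriangular

theorem stmt5_general {Γ : Type} [Group Γ] (ρ ρ' : Γ →* GL (Fin 2) ℂ)
    (hupp : ∀ γ, (ρ γ : Matrix (Fin 2) (Fin 2) ℂ) 1 0 = 0)
    (hupp' : ∀ γ, (ρ' γ : Matrix (Fin 2) (Fin 2) ℂ) 1 0 = 0)
    (hnss' : ∀ V : Submodule ℂ (Fin 2 → ℂ),
      (∀ γ, ∀ v ∈ V, (ρ' γ : Matrix (Fin 2) (Fin 2) ℂ).mulVec v ∈ V) →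
      Module.finrank ℂ V = 1 → V = Submodule.span ℂ {Pi.single (0 : Fin 2) (1 : ℂ)}) :
    (∃ M : GL (Fin 2) ℂ, ∀ γ, M * ρ γ * M⁻¹ = ρ' γ) ↔
      ((∀ γ, (ρ γ : Matrix (Fin 2) (Fin 2) ℂ) 1 1 = (ρ' γ : Matrix (Fin 2) (Fin 2) ℂ) 1 1) ∧
        ∃ P : Matrix (Fin 2) (Fin 2) ℂ, P 1 0 = 0 ∧ P 1 1 = 1 ∧ IsUnit P ∧
          ∀ γ, P * (((ρ γ : Matrix (Fin 2) (Fin 2) ℂ) 1 1)⁻¹ • (ρ γ : Matrix (Fin 2) (Fin 2) ℂ))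
            = (((ρ' γ : Matrix (Fin 2) (Fin 2) ℂ) 1 1)⁻¹
                • (ρ' γ : Matrix (Fin 2) (Fin 2) ℂ)) * P) := by
  have hρ11 γ := GeneralLinearGroup.apply_one_one_ne_zero_of_apply_one_zero _ (hupp γ)
  simp_rw [GeneralLinearGroup.conj_eq_iff_mul_eq_mul]
  constructor
  · rintro ⟨M, hM⟩
    have hM10 := GeneralLinearGroup.apply_one_zero_eq_zero_of_mul_eq_mul M hupp hnss' hM
    have hM11 := GeneralLinearGroup.apply_one_one_ne_zero_of_apply_one_zero M hM10
    have h11 γ := apply_one_one_eq_of_mul_eq_mul hM10 hM11 (hupp' γ) (hM γ)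
    refine ⟨h11, ((M : Matrix (Fin 2) (Fin 2) ℂ) 1 1)⁻¹ • (M : Matrix (Fin 2) (Fin 2) ℂ),
      by simp [hM10], inv_mul_cancel₀ hM11,
      (isUnit_smul_iff (Units.mk0 _ (inv_ne_zero hM11)) _).mpr M.isUnit, fun γ => ?_⟩
    rw [← h11 γ, mul_smul_eq_smul_mul_iff (inv_ne_zero (hρ11 γ)), smul_mul_assoc,
      mul_smul_comm, hM γ]
  · rintro ⟨h11, P, -, -, hPu, hP⟩
    refine ⟨hPu.unit, fun γ => ?_⟩
    have hPγ := hP γ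
    rwa [← h11 γ, mul_smul_eq_smul_mul_iff (inv_ne_zero (hρ11 γ))] at hPγ

/-- Two non-semisimple upper-triangular rank 2 representations are conjugate in `GL₂(ℂ)`
iff their scalar parts are equal and their affine parts are conjugate in `Aff(ℂ)`. -/
theorem stmt5 {Γ : Type} [Group Γ] (ρ ρ' : Γ →* GL (Fin 2) ℂ)
    (hupp : ∀ γ, (ρ γ : Matrix (Fin 2) (Fin 2) ℂ) 1 0 = 0)
    (hupp' : ∀ γ, (ρ' γ : Matrix (Fin 2) (Fin 2) ℂ) 1 0 = 0)
    (hnss : ∀ V : Submodule ℂ (Fin 2 → ℂ),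
      (∀ γ, ∀ v ∈ V, (ρ γ : Matrix (Fin 2) (Fin 2) ℂ).mulVec v ∈ V) →
      Module.finrank ℂ V = 1 → V = Submodule.span ℂ {Pi.single (0 : Fin 2) (1 : ℂ)})
    (hnss' : ∀ V : Submodule ℂ (Fin 2 → ℂ),
      (∀ γ, ∀ v ∈ V, (ρ' γ : Matrix (Fin 2) (Fin 2) ℂ).mulVec v ∈ V) →
      Module.finrank ℂ V = 1 → V = Submodule.span ℂ {Pi.single (0 : Fin 2) (1 : ℂ)}) :
    (∃ M : GL (Fin 2) ℂ, ∀ γ, M * ρ γ * M⁻¹ = ρ' γ) ↔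
      ((∀ γ, (ρ γ : Matrix (Fin 2) (Fin 2) ℂ) 1 1 = (ρ' γ : Matrix (Fin 2) (Fin 2) ℂ) 1 1) ∧
        ∃ P : Matrix (Fin 2) (Fin 2) ℂ, P 1 0 = 0 ∧ P 1 1 = 1 ∧ IsUnit P ∧
          ∀ γ, P * (((ρ γ : Matrix (Fin 2) (Fin 2) ℂ) 1 1)⁻¹ • (ρ γ : Matrix (Fin 2) (Fin 2) ℂ))
            = (((ρ' γ : Matrix (Fin 2) (Fin 2) ℂ) 1 1)⁻¹
                • (ρ' γ : Matrix (Fin 2) (Fin 2) ℂ)) * P) :=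
  stmt5_general ρ ρ' hupp hupp' hnss'
end

section
/- Let A, B be groups with A ⊆ Upp ⊂ GL₂(ℂ), let ρ_A : A → Upp be a non-semisimple representation, and let θ : B → Aut(A) be a homomorphism such that for all h in the image of θ, the representation ρ_A ∘ h⁻¹ is GL₂(ℂ)-conjugate to ρ_A. Then there exists a homomorphism ρ_B : B → GL₂(ℂ) such that ρ_A(θ(β)⁻¹(α)) = ρ_B(β)⁻¹ ρ_A(α) ρ_B(β) for all α ∈ A, β ∈ B. -/
open Matrix

section StmtAux

variable {A : Type} [Group A] (ρA : A →* GL (Fin 2) ℂ)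

private lemma stmt6_det (M : GL (Fin 2) ℂ) (h10 : (M : Matrix (Fin 2) (Fin 2) ℂ) 1 0 = 0) :
    (M : Matrix (Fin 2) (Fin 2) ℂ) 0 0 ≠ 0 ∧ (M : Matrix (Fin 2) (Fin 2) ℂ) 1 1 ≠ 0 := by
  have hdet : (M : Matrix (Fin 2) (Fin 2) ℂ).det ≠ 0 :=
    ((Matrix.isUnit_iff_isUnit_det _).mp ⟨M, rfl⟩).ne_zero
  rw [Matrix.det_fin_two, h10] at hdet
  simp only [mul_zero, sub_zero] at hdet
  exact ⟨left_ne_zero_of_mul hdet, right_ne_zero_of_mul hdet⟩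

private lemma stmt6_tri
    (hupp : ∀ a, (ρA a : Matrix (Fin 2) (Fin 2) ℂ) 1 0 = 0)
    (hnss : ∀ V : Submodule ℂ (Fin 2 → ℂ),
      (∀ a, ∀ v ∈ V, (ρA a : Matrix (Fin 2) (Fin 2) ℂ).mulVec v ∈ V) →
      Module.finrank ℂ V = 1 → V = Submodule.span ℂ {Pi.single (0 : Fin 2) (1 : ℂ)})
    (N : GL (Fin 2) ℂ)
    (h : ∀ a : A, ∃ a' : A, (N : Matrix (Fin 2) (Fin 2) ℂ) * (ρA a' : Matrix (Fin 2) (Fin 2) ℂ)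
        = (ρA a : Matrix (Fin 2) (Fin 2) ℂ) * N) :
    (N : Matrix (Fin 2) (Fin 2) ℂ) 1 0 = 0 := by
  set w : Fin 2 → ℂ := fun i => (N : Matrix (Fin 2) (Fin 2) ℂ) i 0 with hw
  have hw0 : w ≠ 0 := by
    intro h0
    have hdet : (N : Matrix (Fin 2) (Fin 2) ℂ).det ≠ 0 :=
      ((Matrix.isUnit_iff_isUnit_det _).mp ⟨N, rfl⟩).ne_zero
    apply hdet
    rw [Matrix.det_fin_two]
    have h00 : (N : Matrix (Fin 2) (Fin 2) ℂ) 0 0 = 0 := congrFun h0 0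
    have h10 : (N : Matrix (Fin 2) (Fin 2) ℂ) 1 0 = 0 := congrFun h0 1
    rw [h00, h10]; ring
  have hcol : ∀ a : A, ∃ c : ℂ, (ρA a : Matrix (Fin 2) (Fin 2) ℂ).mulVec w = c • w := by
    intro a
    obtain ⟨a', ha'⟩ := h a
    refine ⟨(ρA a' : Matrix (Fin 2) (Fin 2) ℂ) 0 0, ?_⟩
    funext i
    have h1 : ((ρA a : Matrix (Fin 2) (Fin 2) ℂ) * (N : Matrix (Fin 2) (Fin 2) ℂ)) i 0
        = (ρA a : Matrix (Fin 2) (Fin 2) ℂ).mulVec w i := by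
      simp [Matrix.mul_apply, Matrix.mulVec, dotProduct, hw]
    rw [← h1, ← ha', Matrix.mul_apply, Fin.sum_univ_two, hupp a']
    simp [hw, mul_comm]
  have hinv : ∀ a, ∀ v ∈ Submodule.span ℂ {w},
      (ρA a : Matrix (Fin 2) (Fin 2) ℂ).mulVec v ∈ Submodule.span ℂ {w} := by
    intro a v hv
    obtain ⟨c', hc'⟩ := Submodule.mem_span_singleton.mp hv
    obtain ⟨c, hc⟩ := hcol a
    rw [← hc', Matrix.mulVec_smul, hc]
    exact Submodule.smul_mem _ _ (Submodule.smul_mem _ _ (Submodule.mem_span_singleton_self w))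
  have hV := hnss _ hinv (finrank_span_singleton hw0)
  have hmem : w ∈ Submodule.span ℂ {Pi.single (0 : Fin 2) (1 : ℂ)} := by
    rw [← hV]; exact Submodule.mem_span_singleton_self w
  obtain ⟨c, hc⟩ := Submodule.mem_span_singleton.mp hmem
  have := congrFun hc 1
  simp [Pi.single_apply] at this
  exact this.symm

private lemma stmt6_diag
    (hnss : ∀ V : Submodule ℂ (Fin 2 → ℂ),
      (∀ a, ∀ v ∈ V, (ρA a : Matrix (Fin 2) (Fin 2) ℂ).mulVec v ∈ V) →
      Module.finrank ℂ V = 1 → V = Submodule.span ℂ {Pi.single (0 : Fin 2) (1 : ℂ)})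
    (N : GL (Fin 2) ℂ)
    (h10 : (N : Matrix (Fin 2) (Fin 2) ℂ) 1 0 = 0)
    (hc : ∀ a : A, (N : Matrix (Fin 2) (Fin 2) ℂ) * (ρA a : Matrix (Fin 2) (Fin 2) ℂ)
        = (ρA a : Matrix (Fin 2) (Fin 2) ℂ) * N) :
    (N : Matrix (Fin 2) (Fin 2) ℂ) 0 0 = (N : Matrix (Fin 2) (Fin 2) ℂ) 1 1 := by
  by_contra hxz
  set Nm : Matrix (Fin 2) (Fin 2) ℂ := (N : Matrix (Fin 2) (Fin 2) ℂ) with hNm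
  set x : ℂ := Nm 0 0 with hx
  set z : ℂ := Nm 1 1 with hz
  set y : ℂ := Nm 0 1 with hy
  set v : Fin 2 → ℂ := ![y, z - x] with hv
  have hv0 : v 0 = y := rfl
  have hv1 : v 1 = z - x := rfl
  have hzx : z - x ≠ 0 := sub_ne_zero.mpr (Ne.symm hxz)
  have hvne : v ≠ 0 := fun h0 => hzx (by rw [← hv1, h0]; rfl)
  have hNv : Nm.mulVec v = z • v := by
    funext i
    fin_cases i <;>
      simp [Matrix.mulVec, dotProduct, Fin.sum_univ_two, hv0, hv1, h10, ← hz] <;> ring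
  have hinv : ∀ a, ∀ u ∈ Submodule.span ℂ {v},
      (ρA a : Matrix (Fin 2) (Fin 2) ℂ).mulVec u ∈ Submodule.span ℂ {v} := by
    intro a u hu
    obtain ⟨c', hc'⟩ := Submodule.mem_span_singleton.mp hu
    set w : Fin 2 → ℂ := (ρA a : Matrix (Fin 2) (Fin 2) ℂ).mulVec v with hwdef
    have hNw : Nm.mulVec w = z • w := by
      rw [hwdef, Matrix.mulVec_mulVec, hc a, ← Matrix.mulVec_mulVec, hNv,
        Matrix.mulVec_smul]
    have he : x * w 0 + y * w 1 = z * w 0 := by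
      have h0 := congrFun hNw 0
      simpa [Matrix.mulVec, dotProduct, Fin.sum_univ_two, ← hx, ← hy, mul_comm] using h0
    have hwv : w = (w 1 / (z - x)) • v := by
      funext i
      fin_cases i
      · show w 0 = (w 1 / (z - x)) * v 0
        rw [hv0]
        field_simp
        linear_combination -he
      · show w 1 = (w 1 / (z - x)) * v 1
        rw [hv1]
        field_simp
    rw [← hc', Matrix.mulVec_smul, ← hwdef, hwv]
    exact Submodule.smul_mem _ _ (Submodule.smul_mem _ _ (Submodule.mem_span_singleton_self v))
  have hV := hnss _ hinv (finrank_span_singleton hvne)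
  have hmem : v ∈ Submodule.span ℂ {Pi.single (0 : Fin 2) (1 : ℂ)} := by
    rw [← hV]; exact Submodule.mem_span_singleton_self v
  obtain ⟨c, hcc⟩ := Submodule.mem_span_singleton.mp hmem
  have := congrFun hcc 1
  simp [Pi.single_apply] at this
  exact hzx (by rw [← hv1, ← this])

private lemma stmt6_offdiag (N : GL (Fin 2) ℂ)
    (hdd : (N : Matrix (Fin 2) (Fin 2) ℂ) 0 0 = (N : Matrix (Fin 2) (Fin 2) ℂ) 1 1)
    (a0 : A)
    (ha0 : (ρA a0 : Matrix (Fin 2) (Fin 2) ℂ) 0 0 ≠ (ρA a0 : Matrix (Fin 2) (Fin 2) ℂ) 1 1)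
    (hc : (N : Matrix (Fin 2) (Fin 2) ℂ) * (ρA a0 : Matrix (Fin 2) (Fin 2) ℂ)
        = (ρA a0 : Matrix (Fin 2) (Fin 2) ℂ) * N) :
    (N : Matrix (Fin 2) (Fin 2) ℂ) 0 1 = 0 := by
  have h01 := congrFun (congrFun hc 0) 1
  simp only [Matrix.mul_apply, Fin.sum_univ_two] at h01
  have : (N : Matrix (Fin 2) (Fin 2) ℂ) 0 1 *
      ((ρA a0 : Matrix (Fin 2) (Fin 2) ℂ) 1 1 - (ρA a0 : Matrix (Fin 2) (Fin 2) ℂ) 0 0) = 0 := by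
    linear_combination h01 - (ρA a0 : Matrix (Fin 2) (Fin 2) ℂ) 0 1 * hdd
  rcases mul_eq_zero.mp this with h | h
  · exact h
  · exact absurd (sub_eq_zero.mp h).symm ha0

/-- Uniqueness of normalized conjugators. -/
private lemma stmt6_uniq
    (hupp : ∀ a, (ρA a : Matrix (Fin 2) (Fin 2) ℂ) 1 0 = 0)
    (hnss : ∀ V : Submodule ℂ (Fin 2 → ℂ),
      (∀ a, ∀ v ∈ V, (ρA a : Matrix (Fin 2) (Fin 2) ℂ).mulVec v ∈ V) →
      Module.finrank ℂ V = 1 → V = Submodule.span ℂ {Pi.single (0 : Fin 2) (1 : ℂ)})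
    (M M' : GL (Fin 2) ℂ)
    (h : ∀ a : A, M⁻¹ * ρA a * M = M'⁻¹ * ρA a * M')
    (hM10 : (M : Matrix (Fin 2) (Fin 2) ℂ) 1 0 = 0)
    (hM11 : (M : Matrix (Fin 2) (Fin 2) ℂ) 1 1 = 1)
    (hM01 : (∀ a : A, (ρA a : Matrix (Fin 2) (Fin 2) ℂ) 0 0 = (ρA a : Matrix (Fin 2) (Fin 2) ℂ) 1 1)
      → (M : Matrix (Fin 2) (Fin 2) ℂ) 0 1 = 0)
    (hM'10 : (M' : Matrix (Fin 2) (Fin 2) ℂ) 1 0 = 0)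
    (hM'11 : (M' : Matrix (Fin 2) (Fin 2) ℂ) 1 1 = 1)
    (hM'01 : (∀ a : A, (ρA a : Matrix (Fin 2) (Fin 2) ℂ) 0 0 = (ρA a : Matrix (Fin 2) (Fin 2) ℂ) 1 1)
      → (M' : Matrix (Fin 2) (Fin 2) ℂ) 0 1 = 0) :
    M = M' := by
  set N : GL (Fin 2) ℂ := M' * M⁻¹ with hN
  have hcentU : ∀ a : A, N * ρA a = ρA a * N := by
    intro a
    rw [hN, show ρA a * (M' * M⁻¹) = M' * (M'⁻¹ * ρA a * M') * M⁻¹ by group, ← h a]; group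
  have hcent : ∀ a : A, (N : Matrix (Fin 2) (Fin 2) ℂ) * (ρA a : Matrix (Fin 2) (Fin 2) ℂ)
      = (ρA a : Matrix (Fin 2) (Fin 2) ℂ) * N := by
    intro a
    have := congrArg (fun u : GL (Fin 2) ℂ => (u : Matrix (Fin 2) (Fin 2) ℂ)) (hcentU a)
    simpa using this
  have hN10 : (N : Matrix (Fin 2) (Fin 2) ℂ) 1 0 = 0 :=
    stmt6_tri ρA hupp hnss N (fun a => ⟨a, hcent a⟩)
  have hNd : (N : Matrix (Fin 2) (Fin 2) ℂ) 0 0 = (N : Matrix (Fin 2) (Fin 2) ℂ) 1 1 :=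
    stmt6_diag ρA hnss N hN10 hcent
  -- M' = N * M
  have hM'NM : M' = N * M := by rw [hN]; group
  have hmat : (M' : Matrix (Fin 2) (Fin 2) ℂ)
      = (N : Matrix (Fin 2) (Fin 2) ℂ) * (M : Matrix (Fin 2) (Fin 2) ℂ) := by
    have := congrArg (fun u : GL (Fin 2) ℂ => (u : Matrix (Fin 2) (Fin 2) ℂ)) hM'NM
    simpa using this
  have e11 := congrFun (congrFun hmat 1) 1
  simp only [Matrix.mul_apply, Fin.sum_univ_two, hN10, hM11, hM'11] at e11
  -- e11 : 1 = 0 * M 0 1 + N 1 1 * 1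
  have hN11 : (N : Matrix (Fin 2) (Fin 2) ℂ) 1 1 = 1 := by linear_combination -e11
  have hN00 : (N : Matrix (Fin 2) (Fin 2) ℂ) 0 0 = 1 := by rw [hNd, hN11]
  have hN01 : (N : Matrix (Fin 2) (Fin 2) ℂ) 0 1 = 0 := by
    by_cases hP : ∀ a : A, (ρA a : Matrix (Fin 2) (Fin 2) ℂ) 0 0
        = (ρA a : Matrix (Fin 2) (Fin 2) ℂ) 1 1
    · have e01 := congrFun (congrFun hmat 0) 1
      simp only [Matrix.mul_apply, Fin.sum_univ_two, hM01 hP, hM'01 hP, hM11] at e01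
      -- e01 : 0 = N 0 0 * 0 + N 0 1 * 1
      linear_combination -e01
    · push_neg at hP
      obtain ⟨a0, ha0⟩ := hP
      exact stmt6_offdiag ρA N hNd a0 ha0 (hcent a0)
  have hNone : N = 1 := by
    apply Units.ext
    funext i j
    fin_cases i <;> fin_cases j <;>
      simp [hN00, hN01, hN10, hN11, Matrix.one_apply]
  rw [hM'NM, hNone, one_mul]

private lemma stmt6_ex
    (hupp : ∀ a, (ρA a : Matrix (Fin 2) (Fin 2) ℂ) 1 0 = 0)
    (htri : ∀ N : GL (Fin 2) ℂ,
      (∀ a : A, ∃ a' : A, (N : Matrix (Fin 2) (Fin 2) ℂ) * (ρA a' : Matrix (Fin 2) (Fin 2) ℂ)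
        = (ρA a : Matrix (Fin 2) (Fin 2) ℂ) * N) → (N : Matrix (Fin 2) (Fin 2) ℂ) 1 0 = 0)
    (σ : A → A) (M : GL (Fin 2) ℂ)
    (hM : ∀ a : A, ρA (σ a) = M⁻¹ * ρA a * M) :
    ∃ M' : GL (Fin 2) ℂ, (∀ a : A, ρA (σ a) = M'⁻¹ * ρA a * M') ∧
      (M' : Matrix (Fin 2) (Fin 2) ℂ) 1 0 = 0 ∧ (M' : Matrix (Fin 2) (Fin 2) ℂ) 1 1 = 1 ∧
      ((∀ a : A, (ρA a : Matrix (Fin 2) (Fin 2) ℂ) 0 0 = (ρA a : Matrix (Fin 2) (Fin 2) ℂ) 1 1)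
        → (M' : Matrix (Fin 2) (Fin 2) ℂ) 0 1 = 0) := by
  have hMS : ∀ a : A, (M : Matrix (Fin 2) (Fin 2) ℂ) * (ρA (σ a) : Matrix (Fin 2) (Fin 2) ℂ)
      = (ρA a : Matrix (Fin 2) (Fin 2) ℂ) * M := by
    intro a
    have h2 : M * ρA (σ a) = ρA a * M := by rw [hM a]; group
    simpa using congrArg (fun u : GL (Fin 2) ℂ => (u : Matrix (Fin 2) (Fin 2) ℂ)) h2
  have hM10 : (M : Matrix (Fin 2) (Fin 2) ℂ) 1 0 = 0 := htri M (fun a => ⟨σ a, hMS a⟩)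
  obtain ⟨hp, hr⟩ := stmt6_det M hM10
  set p : ℂ := (M : Matrix (Fin 2) (Fin 2) ℂ) 0 0 with hpd
  set q : ℂ := (M : Matrix (Fin 2) (Fin 2) ℂ) 0 1 with hqd
  set r : ℂ := (M : Matrix (Fin 2) (Fin 2) ℂ) 1 1 with hrd
  by_cases hP : ∀ a : A, (ρA a : Matrix (Fin 2) (Fin 2) ℂ) 0 0 = (ρA a : Matrix (Fin 2) (Fin 2) ℂ) 1 1
  · -- equal-diagonal case: normalized conjugator is diagonal
    have hpr : p / r * (r / p) = 1 := by field_simp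
    have hrp : r / p * (p / r) = 1 := by field_simp
    have hval : (!![p/r, 0; 0, 1] : Matrix (Fin 2) (Fin 2) ℂ) * !![r/p, 0; 0, 1] = 1 := by
      rw [Matrix.mul_fin_two, Matrix.one_fin_two]
      simp only [mul_zero, zero_mul, add_zero, zero_add, one_mul, mul_one, hpr]
    have hval2 : (!![r/p, 0; 0, 1] : Matrix (Fin 2) (Fin 2) ℂ) * !![p/r, 0; 0, 1] = 1 := by
      rw [Matrix.mul_fin_two, Matrix.one_fin_two]
      simp only [mul_zero, zero_mul, add_zero, zero_add, one_mul, mul_one, hrp]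
    set M' : GL (Fin 2) ℂ := ⟨!![p/r, 0; 0, 1], !![r/p, 0; 0, 1], hval, hval2⟩ with hM'd
    have hMcoeD : (M' : Matrix (Fin 2) (Fin 2) ℂ) = !![p/r, 0; 0, 1] := rfl
    have keyU : ∀ a : A, M' * ρA (σ a) = ρA a * M' := by
      intro a
      apply Units.ext
      show (!![p/r, 0; 0, 1] : Matrix (Fin 2) (Fin 2) ℂ) * (ρA (σ a) : Matrix (Fin 2) (Fin 2) ℂ)
        = (ρA a : Matrix (Fin 2) (Fin 2) ℂ) * !![p/r, 0; 0, 1]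
      set S : Matrix (Fin 2) (Fin 2) ℂ := (ρA (σ a) : Matrix (Fin 2) (Fin 2) ℂ) with hSd
      set R : Matrix (Fin 2) (Fin 2) ℂ := (ρA a : Matrix (Fin 2) (Fin 2) ℂ) with hRd
      have hS10 : S 1 0 = 0 := hupp (σ a)
      have hR10 : R 1 0 = 0 := hupp a
      have h00 := congrFun (congrFun (hMS a) 0) 0
      have h01 := congrFun (congrFun (hMS a) 0) 1
      have h11 := congrFun (congrFun (hMS a) 1) 1
      simp only [Matrix.mul_apply, Fin.sum_univ_two, ← hSd, ← hRd, ← hpd, ← hqd, ← hrd,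
        hS10, hR10, hM10, mul_zero, zero_mul, add_zero, zero_add] at h00 h01 h11
      have hS00 : S 0 0 = R 0 0 := mul_left_cancel₀ hp (by linear_combination h00)
      have hS11 : S 1 1 = R 1 1 := mul_left_cancel₀ hr (by linear_combination h11)
      have hS01 : p / r * S 0 1 = R 0 1 := by
        have hpS01 : p * S 0 1 = R 0 1 * r := by
          linear_combination h01 - q * hS11 + q * (hP a)
        field_simp
        linear_combination hpS01
      conv_lhs => rw [Matrix.eta_fin_two S]
      conv_rhs => rw [Matrix.eta_fin_two R]
      rw [Matrix.mul_fin_two, Matrix.mul_fin_two]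
      simp only [hS10, hR10, mul_zero, zero_mul, add_zero, zero_add, one_mul, mul_one]
      rw [hS00, hS11, hS01, mul_comm (p/r) (R 0 0)]
    refine ⟨M', ?_, ?_, ?_, ?_⟩
    · intro a
      rw [show M'⁻¹ * ρA a * M' = M'⁻¹ * (ρA a * M') by group, ← keyU a]; group
    · rw [hMcoeD]; simp
    · rw [hMcoeD]; simp
    · intro _; rw [hMcoeD]; simp
  · -- some element has distinct diagonal entries: rescale M
    have hd1 : (r⁻¹ • (1 : Matrix (Fin 2) (Fin 2) ℂ)) * (r • 1) = 1 := by
      rw [smul_mul_assoc, mul_smul_comm, smul_smul, one_mul, inv_mul_cancel₀ hr, one_smul]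
    have hd2 : (r • (1 : Matrix (Fin 2) (Fin 2) ℂ)) * (r⁻¹ • 1) = 1 := by
      rw [smul_mul_assoc, mul_smul_comm, smul_smul, one_mul, mul_inv_cancel₀ hr, one_smul]
    set d : GL (Fin 2) ℂ := ⟨r⁻¹ • 1, r • 1, hd1, hd2⟩ with hdd
    have hcentral : ∀ X : GL (Fin 2) ℂ, d * X = X * d := by
      intro X
      apply Units.ext
      show (r⁻¹ • (1 : Matrix (Fin 2) (Fin 2) ℂ)) * (X : Matrix (Fin 2) (Fin 2) ℂ)
        = (X : Matrix (Fin 2) (Fin 2) ℂ) * (r⁻¹ • 1)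
      rw [smul_mul_assoc, mul_smul_comm, one_mul, mul_one]
    have hMd : ((M * d : GL (Fin 2) ℂ) : Matrix (Fin 2) (Fin 2) ℂ)
        = r⁻¹ • (M : Matrix (Fin 2) (Fin 2) ℂ) := by
      show (M : Matrix (Fin 2) (Fin 2) ℂ) * (r⁻¹ • 1) = _
      rw [mul_smul_comm, mul_one]
    refine ⟨M * d, ?_, ?_, ?_, ?_⟩
    · intro a
      have : (M * d)⁻¹ * ρA a * (M * d) = d⁻¹ * (M⁻¹ * ρA a * M) * d := by group
      rw [this, ← hM a,
        show d⁻¹ * ρA (σ a) * d = d⁻¹ * (ρA (σ a) * d) by group, ← hcentral (ρA (σ a))]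
      group
    · rw [hMd]; show r⁻¹ * (M : Matrix (Fin 2) (Fin 2) ℂ) 1 0 = 0; rw [hM10, mul_zero]
    · rw [hMd]; show r⁻¹ * (M : Matrix (Fin 2) (Fin 2) ℂ) 1 1 = 1
      rw [← hrd, inv_mul_cancel₀ hr]
    · intro h; exact absurd h hP


end StmtAux

/-- A non-semisimple rank 2 upper-triangular representation `ρ_A` whose conjugacy class is
stabilized by every automorphism in the image of `θ : B → Aut(A)` extends the conjugation
to a representation `ρ_B` of `B`. -/
theorem stmt6 {A B : Type} [Group A] [Group B] (ρA : A →* GL (Fin 2) ℂ)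
    (hupp : ∀ a, (ρA a : Matrix (Fin 2) (Fin 2) ℂ) 1 0 = 0)
    (hnss : ∀ V : Submodule ℂ (Fin 2 → ℂ),
      (∀ a, ∀ v ∈ V, (ρA a : Matrix (Fin 2) (Fin 2) ℂ).mulVec v ∈ V) →
      Module.finrank ℂ V = 1 → V = Submodule.span ℂ {Pi.single (0 : Fin 2) (1 : ℂ)})
    (θ : B →* MulAut A)
    (hconj : ∀ b : B, ∃ M : GL (Fin 2) ℂ, ∀ a : A,
      ρA ((θ b)⁻¹ a) = M⁻¹ * ρA a * M) :
    ∃ ρB : B →* GL (Fin 2) ℂ, ∀ (a : A) (b : B),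
      ρA ((θ b)⁻¹ a) = (ρB b)⁻¹ * ρA a * ρB b := by
  classical
  have htri := stmt6_tri ρA hupp hnss
  have hex : ∀ b : B, ∃ M' : GL (Fin 2) ℂ,
      (∀ a : A, ρA ((θ b)⁻¹ a) = M'⁻¹ * ρA a * M') ∧
      (M' : Matrix (Fin 2) (Fin 2) ℂ) 1 0 = 0 ∧ (M' : Matrix (Fin 2) (Fin 2) ℂ) 1 1 = 1 ∧
      ((∀ a : A, (ρA a : Matrix (Fin 2) (Fin 2) ℂ) 0 0 = (ρA a : Matrix (Fin 2) (Fin 2) ℂ) 1 1)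
        → (M' : Matrix (Fin 2) (Fin 2) ℂ) 0 1 = 0) := by
    intro b
    obtain ⟨M, hM⟩ := hconj b
    exact stmt6_ex ρA hupp htri (fun a => (θ b)⁻¹ a) M hM
  choose f hf hf10 hf11 hf01 using hex
  have hmul : ∀ b1 b2 : B, f (b1 * b2) = f b1 * f b2 := by
    intro b1 b2
    have hcoe : ((f b1 * f b2 : GL (Fin 2) ℂ) : Matrix (Fin 2) (Fin 2) ℂ)
        = (f b1 : Matrix (Fin 2) (Fin 2) ℂ) * (f b2 : Matrix (Fin 2) (Fin 2) ℂ) := rfl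
    have hprod10 : ((f b1 * f b2 : GL (Fin 2) ℂ) : Matrix (Fin 2) (Fin 2) ℂ) 1 0 = 0 := by
      rw [hcoe, Matrix.mul_apply, Fin.sum_univ_two, hf10 b1, hf10 b2]
      ring
    have hprod11 : ((f b1 * f b2 : GL (Fin 2) ℂ) : Matrix (Fin 2) (Fin 2) ℂ) 1 1 = 1 := by
      rw [hcoe, Matrix.mul_apply, Fin.sum_univ_two, hf10 b1, hf11 b1, hf11 b2]
      ring
    have hprod01 : (∀ a : A, (ρA a : Matrix (Fin 2) (Fin 2) ℂ) 0 0
        = (ρA a : Matrix (Fin 2) (Fin 2) ℂ) 1 1) →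
        ((f b1 * f b2 : GL (Fin 2) ℂ) : Matrix (Fin 2) (Fin 2) ℂ) 0 1 = 0 := by
      intro hP
      rw [hcoe, Matrix.mul_apply, Fin.sum_univ_two, hf01 b1 hP, hf01 b2 hP]
      ring
    refine stmt6_uniq ρA hupp hnss (f (b1 * b2)) (f b1 * f b2) ?_
      (hf10 _) (hf11 _) (hf01 _) hprod10 hprod11 hprod01
    intro a
    have h2 : (θ (b1 * b2))⁻¹ a = (θ b2)⁻¹ ((θ b1)⁻¹ a) := by
      rw [show θ (b1 * b2) = θ b1 * θ b2 from map_mul θ b1 b2, _root_.mul_inv_rev]; rfl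
    calc (f (b1 * b2))⁻¹ * ρA a * f (b1 * b2)
        = ρA ((θ (b1 * b2))⁻¹ a) := (hf _ a).symm
      _ = ρA ((θ b2)⁻¹ ((θ b1)⁻¹ a)) := by rw [h2]
      _ = (f b2)⁻¹ * ρA ((θ b1)⁻¹ a) * f b2 := hf b2 _
      _ = (f b2)⁻¹ * ((f b1)⁻¹ * ρA a * f b1) * f b2 := by rw [hf b1 a]
      _ = (f b1 * f b2)⁻¹ * ρA a * (f b1 * f b2) := by group
  exact ⟨MonoidHom.mk' f hmul, fun a b => hf b a⟩
end
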